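/- arXiv:2605.21638 — 3 statements merged into one kernel-verified Lean document; each statement's English description precedes it below -/
import Mathlib

section
/- Let (X_n) be a real-valued stochastic process with X_0 = 0 and let τ be an ℕ-valued random variable such that P(τ = n) ≤ C e^{−β n} for all n and some constants C, β > 0, and suppose the limsup growth rate α(δ) := limsup_{n→∞} (1/n) log E[e^{δ X_n}] is finite for all δ in a neighborhood of 0 with α continuous at 0 and α(0)=0. Then there exists δ > 0 such that E[e^{δ X_τ}] < ∞. -/
/-!
Split `E[e^{δ X_τ}]` along the events `{τ = n}`. By Cauchy–Schwarz the `n`-th piece is at most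
`E[e^{2δ X_n}]^{1/2} P(τ = n)^{1/2}`. Take `δ` so small that `α(2δ) < β`; then for some `c < β`
the first factor is eventually at most `e^{c n / 2}`, while the second is at most `√C e^{-β n / 2}`,
so the pieces are eventually dominated by a convergent geometric series.
-/

open MeasureTheory Filter Real Topology Function
open scoped ENNReal

theorem ENNReal.tsum_lt_top_of_eventually_le_geometric {b : ℕ → ℝ≥0∞} (hb : ∀ n, b n ≠ ⊤)
    {K r : ℝ≥0∞} (hK : K ≠ ⊤) (hr : r < 1) (h : ∀ᶠ n in atTop, b n ≤ K * r ^ n) :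
    ∑' n, b n < ⊤ := by
  obtain ⟨N, hN⟩ := eventually_atTop.1 h
  have htail : ∑' n, b (n + N) ≤ ∑' n, K * r ^ n :=
    calc ∑' n, b (n + N) ≤ ∑' n, K * r ^ (n + N) :=
          ENNReal.tsum_le_tsum fun n => hN (n + N) (Nat.le_add_left N n)
      _ ≤ ∑' n, K * r ^ n :=
          ENNReal.tsum_comp_le_tsum_of_injective (add_left_injective N) fun n => K * r ^ n
  have hgeom : ∑' n, K * r ^ n < ⊤ := by
    rw [ENNReal.tsum_mul_left, ENNReal.tsum_geometric]
    exact ENNReal.mul_lt_top hK.lt_top (ENNReal.inv_lt_top.2 (tsub_pos_of_lt hr))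
  rw [← ENNReal.summable.sum_add_tsum_nat_add']
  exact ENNReal.add_lt_top.2 ⟨ENNReal.sum_lt_top.2 fun n _ => (hb n).lt_top, htail.trans_lt hgeom⟩

theorem eventually_le_exp_of_limsup_log_div_lt {a : ℕ → ℝ} {c : ℝ}
    (hbdd : IsBoundedUnder (· ≤ ·) atTop fun n : ℕ => log (a n) / n)
    (h : limsup (fun n : ℕ => log (a n) / n) atTop < c) :
    ∀ᶠ n : ℕ in atTop, a n ≤ exp (c * n) := by
  filter_upwards [eventually_lt_of_limsup_lt h hbdd, eventually_gt_atTop 0] with n hn hn0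
  rcases le_or_gt (a n) 0 with ha | ha
  · exact ha.trans (exp_pos _).le
  · rw [div_lt_iff₀ (by exact_mod_cast hn0), log_lt_iff_lt_exp ha] at hn
    exact hn.le

section

variable {Ω : Type*} [MeasurableSpace Ω] {μ : Measure Ω}

theorem setLIntegral_le_sqrt_lintegral_sq_mul_sqrt_measure {f : Ω → ℝ≥0∞}
    (hf : AEMeasurable f μ) (s : Set Ω) :
    ∫⁻ ω in s, f ω ∂μ ≤ (∫⁻ ω, f ω ^ (2 : ℝ) ∂μ) ^ (1 / 2 : ℝ) * μ s ^ (1 / 2 : ℝ) := by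
  have h := ENNReal.lintegral_mul_le_Lp_mul_Lq (μ.restrict s) Real.HolderConjugate.two_two
    hf.restrict (aemeasurable_const (b := (1 : ℝ≥0∞)))
  simp only [Pi.mul_apply, mul_one, one_mul, ENNReal.one_rpow, lintegral_const,
    Measure.restrict_apply_univ] at h
  exact h.trans
    (mul_le_mul' (ENNReal.rpow_le_rpow (setLIntegral_le_lintegral _ _) (by norm_num)) le_rfl)

theorem lintegral_comp_eq_tsum_setLIntegral {τ : Ω → ℕ} (hτ : Measurable τ)
    (F : ℕ → Ω → ℝ≥0∞) :
    ∫⁻ ω, F (τ ω) ω ∂μ = ∑' n, ∫⁻ ω in {ω | τ ω = n}, F n ω ∂μ := by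
  have hs (n : ℕ) : MeasurableSet {ω | τ ω = n} := hτ (measurableSet_singleton n)
  have hcover : ⋃ n, {ω | τ ω = n} = Set.univ := Set.iUnion_eq_univ_iff.2 fun ω => ⟨τ ω, rfl⟩
  rw [← setLIntegral_univ, ← hcover, lintegral_iUnion hs (pairwise_disjoint_fiber τ)]
  exact tsum_congr fun n => setLIntegral_congr_fun (hs n) fun ω hω => by rw [hω]

theorem lintegral_exp_mul_comp_lt_top {X : ℕ → Ω → ℝ} (hX : ∀ n, Measurable (X n))
    {τ : Ω → ℕ} (hτ : Measurable τ) {C β c δ : ℝ} (hC : 0 ≤ C) (hcβ : c < β)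
    (hτtail : ∀ n : ℕ, μ {ω | τ ω = n} ≤ ENNReal.ofReal (C * exp (-β * n)))
    (hfin : ∀ n, ∫⁻ ω, ENNReal.ofReal (exp (2 * δ * X n ω)) ∂μ ≠ ⊤)
    (hgrowth : ∀ᶠ n : ℕ in atTop,
      ∫⁻ ω, ENNReal.ofReal (exp (2 * δ * X n ω)) ∂μ ≤ ENNReal.ofReal (exp (c * n))) :
    ∫⁻ ω, ENNReal.ofReal (exp (δ * X (τ ω) ω)) ∂μ < ⊤ := by
  have hsq (n : ℕ) (ω : Ω) :
      ENNReal.ofReal (exp (δ * X n ω)) ^ (2 : ℝ) = ENNReal.ofReal (exp (2 * δ * X n ω)) := by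
    rw [ENNReal.ofReal_rpow_of_nonneg (exp_pos _).le zero_le_two, ← exp_mul]
    ring_nf
  have hCS (n : ℕ) : ∫⁻ ω in {ω | τ ω = n}, ENNReal.ofReal (exp (δ * X n ω)) ∂μ ≤
      (∫⁻ ω, ENNReal.ofReal (exp (2 * δ * X n ω)) ∂μ) ^ (1 / 2 : ℝ) *
        μ {ω | τ ω = n} ^ (1 / 2 : ℝ) := by
    simpa only [hsq] using setLIntegral_le_sqrt_lintegral_sq_mul_sqrt_measure
      (by fun_prop : Measurable fun ω => ENNReal.ofReal (exp (δ * X n ω))).aemeasurable _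
  rw [lintegral_comp_eq_tsum_setLIntegral hτ fun n ω => ENNReal.ofReal (exp (δ * X n ω))]
  refine ENNReal.tsum_lt_top_of_eventually_le_geometric (K := ENNReal.ofReal √C) (fun n => ?_)
    ENNReal.ofReal_ne_top
    (ENNReal.ofReal_lt_one.2 (exp_lt_one_iff.2 (by linarith : (c - β) / 2 < 0))) ?_
  · refine ne_top_of_le_ne_top (ENNReal.mul_ne_top ?_ ?_) (hCS n)
    · exact ENNReal.rpow_ne_top_of_nonneg (by norm_num) (hfin n)
    · exact ENNReal.rpow_ne_top_of_nonneg (by norm_num)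
        (ne_top_of_le_ne_top ENNReal.ofReal_ne_top (hτtail n))
  · filter_upwards [hgrowth] with n hn
    calc _ ≤ _ := hCS n
      _ ≤ ENNReal.ofReal (exp (c * n)) ^ (1 / 2 : ℝ) *
          ENNReal.ofReal (C * exp (-β * n)) ^ (1 / 2 : ℝ) := by gcongr; exact hτtail n
      _ = ENNReal.ofReal (√C) * ENNReal.ofReal (exp ((c - β) / 2)) ^ n := by
        rw [ENNReal.ofReal_rpow_of_nonneg (exp_pos _).le (by norm_num),
          ENNReal.ofReal_rpow_of_nonneg (by positivity) (by norm_num),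
          ← ENNReal.ofReal_pow (exp_pos _).le, ← ENNReal.ofReal_mul (by positivity),
          ← ENNReal.ofReal_mul (sqrt_nonneg _), mul_rpow hC (exp_pos _).le, ← exp_mul, ← exp_mul,
          ← exp_nat_mul, ← sqrt_eq_rpow, mul_left_comm, ← exp_add]
        ring_nf

end

theorem stmt1_general {Ω : Type*} [MeasurableSpace Ω] (μ : Measure Ω) [IsProbabilityMeasure μ]
    (X : ℕ → Ω → ℝ) (hXm : ∀ n, Measurable (X n))
    (τ : Ω → ℕ) (hτm : Measurable τ)
    (C β : ℝ) (hC : 0 < C) (hβ : 0 < β)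
    (hτtail : ∀ n : ℕ, μ {ω | τ ω = n} ≤ ENNReal.ofReal (C * Real.exp (-β * n)))
    (α : ℝ → ℝ) (ε : ℝ) (hε : 0 < ε)
    (hfin : ∀ δ ∈ Set.Ioo (-ε) ε, ∀ n : ℕ,
      ∫⁻ ω, ENNReal.ofReal (Real.exp (δ * X n ω)) ∂μ < ⊤)
    (hαdef : ∀ δ ∈ Set.Ioo (-ε) ε,
      α δ = limsup (fun n : ℕ =>
        Real.log ((∫⁻ ω, ENNReal.ofReal (Real.exp (δ * X n ω)) ∂μ).toReal) / n) atTop)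
    (hbdd : ∀ δ ∈ Set.Ioo (-ε) ε, IsBoundedUnder (· ≤ ·) atTop
      (fun n : ℕ =>
        Real.log ((∫⁻ ω, ENNReal.ofReal (Real.exp (δ * X n ω)) ∂μ).toReal) / n))
    (hα0 : α 0 = 0) (hαcont : ContinuousAt α 0) :
    ∃ δ > 0, ∫⁻ ω, ENNReal.ofReal (Real.exp (δ * X (τ ω) ω)) ∂μ < ⊤ := by
  have hα : ∀ᶠ t in 𝓝 0, t ∈ Set.Ioo (-ε) ε ∧ α t < β :=
    Eventually.and (Ioo_mem_nhds (neg_neg_of_pos hε) hε)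
      (hαcont.eventually (gt_mem_nhds (by rwa [hα0] : α 0 < β)))
  obtain ⟨t, ⟨htε, hαt⟩, ht⟩ := ((hα.filter_mono nhdsWithin_le_nhds).and
    (self_mem_nhdsWithin : Set.Ioi (0 : ℝ) ∈ 𝓝[>] 0)).exists
  have h2t : 2 * (t / 2) = t := by ring
  refine ⟨t / 2, half_pos ht, ?_⟩
  refine lintegral_exp_mul_comp_lt_top hXm hτm hC.le (c := (α t + β) / 2) (by linarith) hτtail
    (fun n => by rw [h2t]; exact (hfin t htε n).ne) ?_
  have hlimsup := (hαdef t htε).symm.trans_lt (show α t < (α t + β) / 2 by linarith)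
  filter_upwards [eventually_le_exp_of_limsup_log_div_lt (hbdd t htε) hlimsup] with n hn
  rw [h2t, ← ENNReal.ofReal_toReal (hfin t htε n).ne]
  exact ENNReal.ofReal_le_ofReal hn

/-- If the regeneration time τ has an exponentially decaying distribution and the growth rate
α(δ) = limsup (1/n) log E[e^{δ X_n}] is finite near 0 and continuous at 0 with α(0) = 0,
then X_τ has a finite exponential moment. -/
theorem stmt1 {Ω : Type*} [MeasurableSpace Ω] (μ : Measure Ω) [IsProbabilityMeasure μ]
    (X : ℕ → Ω → ℝ) (hXm : ∀ n, Measurable (X n)) (hX0 : ∀ ω, X 0 ω = 0)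
    (τ : Ω → ℕ) (hτm : Measurable τ)
    (C β : ℝ) (hC : 0 < C) (hβ : 0 < β)
    (hτtail : ∀ n : ℕ, μ {ω | τ ω = n} ≤ ENNReal.ofReal (C * Real.exp (-β * n)))
    (α : ℝ → ℝ) (ε : ℝ) (hε : 0 < ε)
    (hfin : ∀ δ ∈ Set.Ioo (-ε) ε, ∀ n : ℕ,
      ∫⁻ ω, ENNReal.ofReal (Real.exp (δ * X n ω)) ∂μ < ⊤)
    (hαdef : ∀ δ ∈ Set.Ioo (-ε) ε,
      α δ = limsup (fun n : ℕ =>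
        Real.log ((∫⁻ ω, ENNReal.ofReal (Real.exp (δ * X n ω)) ∂μ).toReal) / n) atTop)
    (hbdd : ∀ δ ∈ Set.Ioo (-ε) ε, IsBoundedUnder (· ≤ ·) atTop
      (fun n : ℕ =>
        Real.log ((∫⁻ ω, ENNReal.ofReal (Real.exp (δ * X n ω)) ∂μ).toReal) / n))
    (hα0 : α 0 = 0) (hαcont : ContinuousAt α 0) :
    ∃ δ > 0, ∫⁻ ω, ENNReal.ofReal (Real.exp (δ * X (τ ω) ω)) ∂μ < ⊤ :=
  stmt1_general μ X hXm τ hτm C β hC hβ hτtail α ε hε hfin hαdef hbdd hα0 hαcont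
end

section
/- Let (X_n)_{n≥0} be a real-valued process with X_0 = 0 such that for some ε > 0 the growth rate α(ε) := limsup_n (1/n) log E[e^{ε X_n}] is finite and α(ε) → 0 as ε ↓ 0, and let τ be an ℕ-valued random variable with P(τ > n) ≤ C e^{−β n} for constants C, β > 0. Then the function h(t) := Σ_{n=0}^∞ P(X_n ∈ [t−q, t], τ > n) satisfies h(t) = O(e^{−δ t}) as t → ∞ for some δ > 0, for every fixed q > 0. -/
open MeasureTheory Filter Asymptotics

/-!
Pick ε small enough that α(ε) < γ < β for some γ. Then E[e^{ε X_n}] ≤ M e^{γ n} for all n, so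
Chernoff's bound gives P(X_n ≥ t - q) ≤ M e^{γ n} e^{-ε (t - q)}, while P(τ > n) ≤ C e^{-β n}.
The n-th term of h(t) is at most the geometric mean of these two bounds, which is
const · e^{-ε t / 2} · (e^{(γ - β) / 2})^n; summing the geometric series in n gives the decay
rate δ = ε / 2.
-/

lemma exists_forall_le_mul_exp_of_limsup_log_div_lt {u : ℕ → ℝ} {γ : ℝ} (hu : ∀ n, 0 ≤ u n)
    (hbdd : IsBoundedUnder (· ≤ ·) atTop fun n : ℕ => Real.log (u n) / n)
    (hlim : limsup (fun n : ℕ => Real.log (u n) / n) atTop < γ) :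
    ∃ M, ∀ n, u n ≤ M * Real.exp (γ * n) := by
  have hev : ∀ᶠ n : ℕ in atTop, u n ≤ Real.exp (γ * n) := by
    filter_upwards [eventually_lt_of_limsup_lt hlim hbdd, eventually_gt_atTop 0] with n hn hn0
    rcases (hu n).eq_or_lt with h | h
    · rw [← h]; positivity
    · rw [div_lt_iff₀ (by positivity), Real.log_lt_iff_lt_exp h] at hn
      exact hn.le
  have hO : u =O[cofinite] fun n : ℕ => Real.exp (γ * n) := by
    rw [Nat.cofinite_eq_atTop]
    refine IsBigO.of_bound' ?_
    filter_upwards [hev] with n hn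
    simpa [abs_of_nonneg (hu n)] using hn
  obtain ⟨M, hM⟩ := (isBigO_cofinite_iff fun n h => absurd h (Real.exp_ne_zero _)).1 hO
  exact ⟨M, fun n => by simpa [abs_of_nonneg (hu n)] using hM n⟩

lemma ENNReal.le_ofReal_sqrt_mul {x : ENNReal} {a b : ℝ} (ha : x ≤ ENNReal.ofReal a)
    (hb : x ≤ ENNReal.ofReal b) : x ≤ ENNReal.ofReal √(a * b) := by
  have hx : x = ENNReal.ofReal x.toReal :=
    (ENNReal.ofReal_toReal (ne_top_of_le_ne_top ENNReal.ofReal_ne_top ha)).symm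
  rw [hx, ENNReal.ofReal_le_ofReal_iff'] at ha hb ⊢
  rcases ha with ha | h0
  · rcases hb with hb | h0
    · exact Or.inl (Real.le_sqrt_of_sq_le (by nlinarith [x.toReal_nonneg]))
    · exact Or.inr h0
  · exact Or.inr h0

lemma measure_ge_le_ofReal_mul_exp {Ω : Type*} [MeasurableSpace Ω] {μ : Measure Ω}
    {Y : Ω → ℝ} (hY : AEMeasurable Y μ) {ε B : ℝ} (hε : 0 < ε)
    (hfin : ∫⁻ ω, ENNReal.ofReal (Real.exp (ε * Y ω)) ∂μ < ⊤)
    (hB : (∫⁻ ω, ENNReal.ofReal (Real.exp (ε * Y ω)) ∂μ).toReal ≤ B) (a : ℝ) :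
    μ {ω | a ≤ Y ω} ≤ ENNReal.ofReal (B * Real.exp (-(ε * a))) := by
  have hexp : ENNReal.ofReal (Real.exp (ε * a)) * ENNReal.ofReal (Real.exp (-(ε * a))) = 1 := by
    rw [← ENNReal.ofReal_mul (Real.exp_pos _).le, ← Real.exp_add, add_neg_cancel, Real.exp_zero,
      ENNReal.ofReal_one]
  have hset : {ω | a ≤ Y ω} =
      {ω | ENNReal.ofReal (Real.exp (ε * a)) ≤ ENNReal.ofReal (Real.exp (ε * Y ω))} := by
    ext ω
    simp only [ENNReal.ofReal_le_ofReal_iff (Real.exp_pos _).le,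
      Real.exp_le_exp, mul_le_mul_iff_right₀ hε]
  calc μ {ω | a ≤ Y ω}
      = ENNReal.ofReal (Real.exp (ε * a)) * μ {ω | a ≤ Y ω} *
          ENNReal.ofReal (Real.exp (-(ε * a))) := by
        rw [mul_comm _ (μ _), mul_assoc, hexp, mul_one]
    _ ≤ (∫⁻ ω, ENNReal.ofReal (Real.exp (ε * Y ω)) ∂μ) * ENNReal.ofReal (Real.exp (-(ε * a))) := by
        gcongr
        rw [hset]
        exact mul_meas_ge_le_lintegral₀ (by fun_prop) _
    _ ≤ ENNReal.ofReal B * ENNReal.ofReal (Real.exp (-(ε * a))) := by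
        gcongr
        rw [← ENNReal.ofReal_toReal hfin.ne]
        exact ENNReal.ofReal_le_ofReal hB
    _ = ENNReal.ofReal (B * Real.exp (-(ε * a))) := (ENNReal.ofReal_mul' (Real.exp_pos _).le).symm

lemma sqrt_chernoff_mul_tail_eq (M C γ β ε q t : ℝ) (n : ℕ) :
    √(M * Real.exp (γ * n) * Real.exp (-(ε * (t - q))) * (C * Real.exp (-β * n))) =
      √(M * C) * Real.exp (ε * q / 2) * Real.exp (-(ε / 2) * t) *
        Real.exp ((γ - β) / 2) ^ n := by
  rw [show M * Real.exp (γ * n) * Real.exp (-(ε * (t - q))) * (C * Real.exp (-β * n)) =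
      M * C * Real.exp (γ * n + -(ε * (t - q)) + -β * n) by
        rw [Real.exp_add, Real.exp_add]; ring,
    Real.sqrt_mul' _ (Real.exp_pos _).le, ← Real.exp_half, ← Real.exp_nat_mul, mul_assoc,
    mul_assoc, ← Real.exp_add, ← Real.exp_add]
  congr 2
  ring

lemma ENNReal.tsum_le_ofReal_div_of_le_geometric {f : ℕ → ENNReal} {c r : ℝ} (hc : 0 ≤ c)
    (hr₀ : 0 ≤ r) (hr₁ : r < 1) (hf : ∀ n, f n ≤ ENNReal.ofReal (c * r ^ n)) :
    ∑' n, f n ≤ ENNReal.ofReal (c / (1 - r)) := by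
  calc ∑' n, f n ≤ ∑' n, ENNReal.ofReal (c * r ^ n) := ENNReal.tsum_le_tsum hf
    _ = ENNReal.ofReal (∑' n, c * r ^ n) :=
        (ENNReal.ofReal_tsum_of_nonneg (fun n => by positivity)
          ((summable_geometric_of_lt_one hr₀ hr₁).mul_left c)).symm
    _ = ENNReal.ofReal (c / (1 - r)) := by
        rw [tsum_mul_left, tsum_geometric_of_lt_one hr₀ hr₁, div_eq_mul_inv]

theorem stmt2_general {Ω : Type*} [MeasurableSpace Ω] (μ : Measure Ω)
    (X : ℕ → Ω → ℝ) (hXm : ∀ n, Measurable (X n))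
    (τ : Ω → ℕ)
    (C β : ℝ) (hβ : 0 < β)
    (hτtail : ∀ n : ℕ, μ {ω | n < τ ω} ≤ ENNReal.ofReal (C * Real.exp (-β * n)))
    (α : ℝ → ℝ) (ε₁ : ℝ) (hε₁ : 0 < ε₁)
    (hfin : ∀ ε ∈ Set.Ioo (0 : ℝ) ε₁, ∀ n : ℕ,
      ∫⁻ ω, ENNReal.ofReal (Real.exp (ε * X n ω)) ∂μ < ⊤)
    (hαdef : ∀ ε ∈ Set.Ioo (0 : ℝ) ε₁,
      α ε = limsup (fun n : ℕ =>
        Real.log ((∫⁻ ω, ENNReal.ofReal (Real.exp (ε * X n ω)) ∂μ).toReal) / n) atTop)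
    (hbdd : ∀ ε ∈ Set.Ioo (0 : ℝ) ε₁, IsBoundedUnder (· ≤ ·) atTop
      (fun n : ℕ =>
        Real.log ((∫⁻ ω, ENNReal.ofReal (Real.exp (ε * X n ω)) ∂μ).toReal) / n))
    (hα0 : Tendsto α (nhdsWithin 0 (Set.Ioi 0)) (nhds 0))
    (q : ℝ) :
    ∃ δ > 0, ∃ C' T : ℝ, ∀ t ≥ T,
      (∑' n : ℕ, μ {ω | X n ω ∈ Set.Icc (t - q) t ∧ n < τ ω})
        ≤ ENNReal.ofReal (C' * Real.exp (-δ * t)) := by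
  obtain ⟨ε, hε, hαε⟩ : ∃ ε ∈ Set.Ioo 0 ε₁, α ε < β :=
    (Eventually.and (Ioo_mem_nhdsGT hε₁) (hα0 (Iio_mem_nhds hβ))).exists
  obtain ⟨γ, hαγ, hγβ⟩ := exists_between hαε
  obtain ⟨M, hM⟩ : ∃ M, ∀ n : ℕ,
      (∫⁻ ω, ENNReal.ofReal (Real.exp (ε * X n ω)) ∂μ).toReal ≤ M * Real.exp (γ * n) :=
    exists_forall_le_mul_exp_of_limsup_log_div_lt (fun n => ENNReal.toReal_nonneg) (hbdd ε hε)
      (hαdef ε hε ▸ hαγ)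
  set r := Real.exp ((γ - β) / 2)
  set K := √(M * C) * Real.exp (ε * q / 2)
  have hterm : ∀ (t : ℝ) (n : ℕ), μ {ω | X n ω ∈ Set.Icc (t - q) t ∧ n < τ ω} ≤
      ENNReal.ofReal (K * Real.exp (-(ε / 2) * t) * r ^ n) := fun t n => by
    rw [← sqrt_chernoff_mul_tail_eq M C γ β ε q t n]
    refine ENNReal.le_ofReal_sqrt_mul ((measure_mono fun ω h => h.1.1).trans ?_)
      ((measure_mono fun ω h => h.2).trans (hτtail n))
    exact measure_ge_le_ofReal_mul_exp (hXm n).aemeasurable hε.1 (hfin ε hε n) (hM n) (t - q)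
  have hr : r < 1 := Real.exp_lt_one_iff.2 (by linarith)
  refine ⟨ε / 2, half_pos hε.1, K / (1 - r), 0, fun t _ => ?_⟩
  calc _ ≤ ENNReal.ofReal (K * Real.exp (-(ε / 2) * t) / (1 - r)) :=
        ENNReal.tsum_le_ofReal_div_of_le_geometric (by positivity) (Real.exp_pos _).le hr (hterm t)
    _ = _ := by ring_nf

/-- If τ has exponential tails and the exponential growth rate α(ε) of E[e^{ε X_n}] is finite
for small ε > 0 with α(ε) → 0 as ε ↓ 0, then
h(t) = Σ_n P(X_n ∈ [t−q,t], τ > n) decays exponentially as t → ∞, for every fixed q > 0. -/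
theorem stmt2 {Ω : Type*} [MeasurableSpace Ω] (μ : Measure Ω) [IsProbabilityMeasure μ]
    (X : ℕ → Ω → ℝ) (hXm : ∀ n, Measurable (X n)) (hX0 : ∀ ω, X 0 ω = 0)
    (τ : Ω → ℕ) (hτm : Measurable τ)
    (C β : ℝ) (hC : 0 < C) (hβ : 0 < β)
    (hτtail : ∀ n : ℕ, μ {ω | n < τ ω} ≤ ENNReal.ofReal (C * Real.exp (-β * n)))
    (α : ℝ → ℝ) (ε₁ : ℝ) (hε₁ : 0 < ε₁)
    (hfin : ∀ ε ∈ Set.Ioo (0 : ℝ) ε₁, ∀ n : ℕ,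
      ∫⁻ ω, ENNReal.ofReal (Real.exp (ε * X n ω)) ∂μ < ⊤)
    (hαdef : ∀ ε ∈ Set.Ioo (0 : ℝ) ε₁,
      α ε = limsup (fun n : ℕ =>
        Real.log ((∫⁻ ω, ENNReal.ofReal (Real.exp (ε * X n ω)) ∂μ).toReal) / n) atTop)
    (hbdd : ∀ ε ∈ Set.Ioo (0 : ℝ) ε₁, IsBoundedUnder (· ≤ ·) atTop
      (fun n : ℕ =>
        Real.log ((∫⁻ ω, ENNReal.ofReal (Real.exp (ε * X n ω)) ∂μ).toReal) / n))
    (hα0 : Tendsto α (nhdsWithin 0 (Set.Ioi 0)) (nhds 0))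
    (q : ℝ) (hq : 0 < q) :
    ∃ δ > 0, ∃ C' T : ℝ, ∀ t ≥ T,
      (∑' n : ℕ, μ {ω | X n ω ∈ Set.Icc (t - q) t ∧ n < τ ω})
        ≤ ENNReal.ofReal (C' * Real.exp (-δ * t)) :=
  stmt2_general μ X hXm τ C β hβ hτtail α ε₁ hε₁ hfin hαdef hbdd hα0 q
end

section
/- Let K : (r_hc, ∞)^k × (r_hc, ∞)^k → ℝ be given by K(z, z') = exp(−β(½V_p(z) + W(z;z') + ½V_p(z'))) where V_p(z) = Σ_{1≤i<j≤k+1} v(z_i+⋯+z_{j−1}) + p Σ z_i and W(z;z') = Σ_{i,j} v(z_i+⋯+z_k+z'_1+⋯+z'_j), with v : ℝ₊ → ℝ ∪ {∞} bounded from below, finite on (r_hc, ∞), p > 0, β > 0. Then K(x,y) = K(s(y), s(x)) where s reverses coordinates, K is strictly positive on (r_hc,∞)^{2k}, and the integral operator with kernel K is Hilbert–Schmidt (hence compact) on L²((r_hc,∞)^k). -/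
open MeasureTheory

/-- Extend a vector of spacings `z : Fin k → ℝ` to ℕ by zero. -/
noncomputable def zext {k : ℕ} (z : Fin k → ℝ) (l : ℕ) : ℝ :=
  if h : l < k then z ⟨l, h⟩ else 0

/-- V_p(z) = Σ_{1≤i<j≤k+1} v(z_i+⋯+z_{j−1}) + p Σ z_i (0-indexed form). -/
noncomputable def Vp {k : ℕ} (v : ℝ → EReal) (p : ℝ) (z : Fin k → ℝ) : ℝ :=
  (∑ i ∈ Finset.range k, ∑ j ∈ Finset.Icc (i + 1) k,
      (v (∑ l ∈ Finset.Ico i j, zext z l)).toReal)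
    + p * ∑ i ∈ Finset.range k, zext z i

/-- W(z;z') = Σ_{i=1}^k Σ_{j=1}^k v(z_i+⋯+z_k+z'_1+⋯+z'_j) (0-indexed form). -/
noncomputable def Wint {k : ℕ} (v : ℝ → EReal) (z z' : Fin k → ℝ) : ℝ :=
  ∑ i ∈ Finset.range k, ∑ j ∈ Finset.range k,
    (v ((∑ l ∈ Finset.Ico i k, zext z l) + ∑ l ∈ Finset.range (j + 1), zext z' l)).toReal

/-- Transfer kernel K(z,z') = exp(−β(½V_p(z) + W(z;z') + ½V_p(z'))). -/
noncomputable def Kgibbs {k : ℕ} (v : ℝ → EReal) (β p : ℝ) (z z' : Fin k → ℝ) : ℝ :=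
  Real.exp (-(β * ((1 / 2) * Vp v p z + Wint v z z' + (1 / 2) * Vp v p z')))

/-!
Reversing both configurations maps every interval sum `z_i + ⋯ + z_{j-1}` occurring in `V_p`
to another such sum, and exchanges the two partial sums inside each term of `W`; this gives
the inversion symmetry. For the Hilbert–Schmidt bound, `v ≥ c` with `c ≤ 0` bounds each of
the at most `k²` interaction terms of `V_p` and of `W` below by `c`, so
`K(z,z')² ≤ C · e^{-βp Σ zᵢ} · e^{-βp Σ z'ᵢ}`, a product of functions integrable on the box.
-/

open MeasureTheory Finset
open scoped ENNReal

lemma sum_Ico_zext_rev {k : ℕ} (w : Fin k → ℝ) {a b : ℕ} (hb : b ≤ k) :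
    ∑ l ∈ Ico a b, zext (fun i => w (Fin.rev i)) l = ∑ l ∈ Ico (k - b) (k - a), zext w l := by
  refine sum_nbij' (fun l => k - 1 - l) (fun l => k - 1 - l) ?_ ?_ ?_ ?_ ?_ <;>
    intro l hl <;> simp only [mem_Ico] at hl ⊢
  any_goals omega
  simp only [zext, dif_pos (show l < k by omega), dif_pos (show k - 1 - l < k by omega)]
  congr 1
  ext
  simp only [Fin.val_rev]
  omega

lemma sum_range_zext {k : ℕ} (z : Fin k → ℝ) : ∑ l ∈ range k, zext z l = ∑ i, z i := by
  rw [← Fin.sum_univ_eq_sum_range]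
  exact sum_congr rfl fun i _ => dif_pos i.isLt

section Inversion

variable {k : ℕ} (v : ℝ → EReal)

lemma Vp_rev (p : ℝ) (z : Fin k → ℝ) : Vp v p (fun i => z (Fin.rev i)) = Vp v p z := by
  unfold Vp
  rw [sum_range_zext, sum_range_zext, Fintype.sum_equiv Fin.revPerm (fun i => z i.rev) z
    fun _ => rfl, sum_sigma', sum_sigma']
  congr 1
  refine sum_nbij' (fun x => ⟨k - x.2, k - x.1⟩) (fun x => ⟨k - x.2, k - x.1⟩) ?_ ?_ ?_ ?_ ?_ <;>
    rintro ⟨a, b⟩ h <;> simp only [mem_sigma, mem_range, mem_Icc] at h ⊢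
  any_goals omega
  · rw [Sigma.mk.injEq]; exact ⟨by omega, heq_of_eq (by omega)⟩
  · rw [Sigma.mk.injEq]; exact ⟨by omega, heq_of_eq (by omega)⟩
  · rw [sum_Ico_zext_rev z h.2.2]

lemma Wint_rev (z z' : Fin k → ℝ) :
    Wint v (fun i => z' (Fin.rev i)) (fun i => z (Fin.rev i)) = Wint v z z' := by
  unfold Wint
  rw [← sum_product', ← sum_product']
  refine sum_nbij' (fun x => (k - 1 - x.2, k - 1 - x.1)) (fun x => (k - 1 - x.2, k - 1 - x.1))
    ?_ ?_ ?_ ?_ ?_ <;> rintro ⟨a, b⟩ h <;> simp only [mem_product, mem_range] at h ⊢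
  any_goals omega
  · rw [Prod.mk.injEq]; omega
  · rw [Prod.mk.injEq]; omega
  · rw [add_comm, range_eq_Ico, range_eq_Ico, sum_Ico_zext_rev z (by omega),
      sum_Ico_zext_rev z' le_rfl, Nat.sub_zero, Nat.sub_self, show k - (b + 1) = k - 1 - b by omega,
      show k - 1 - a + 1 = k - a by omega]

lemma Kgibbs_rev (β p : ℝ) (z z' : Fin k → ℝ) :
    Kgibbs v β p (fun i => z' (Fin.rev i)) (fun i => z (Fin.rev i)) = Kgibbs v β p z z' := by
  simp only [Kgibbs, Vp_rev, Wint_rev]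
  ring_nf

end Inversion

-- `hc` is needed for `e = ⊤`, whose `toReal` is `0`.
lemma le_toReal_of_coe_le {c : ℝ} {e : EReal} (hc : c ≤ 0) (h : (c : EReal) ≤ e) :
    c ≤ e.toReal := by
  by_cases he : e = ⊤
  · simpa [he] using hc
  · simpa using EReal.toReal_le_toReal h (EReal.coe_ne_bot c) he

lemma nat_mul_le_sum_of_card_le {ι : Type*} {s : Finset ι} {f : ι → ℝ} {c : ℝ} {n : ℕ}
    (hc : c ≤ 0) (h : ∀ i ∈ s, c ≤ f i) (hn : #s ≤ n) : n * c ≤ ∑ i ∈ s, f i :=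
  calc (n : ℝ) * c ≤ #s * c := mul_le_mul_of_nonpos_right (by exact_mod_cast hn) hc
    _ ≤ ∑ i ∈ s, f i := by simpa using card_nsmul_le_sum s f c h

section LowerBounds

variable {k : ℕ} {v : ℝ → EReal} {c : ℝ}

lemma le_Vp (hc : c ≤ 0) (hv : ∀ x, (c : EReal) ≤ v x) (p : ℝ) (z : Fin k → ℝ) :
    k * (k * c) + p * ∑ i, z i ≤ Vp v p z := by
  rw [Vp, sum_range_zext]
  gcongr
  refine nat_mul_le_sum_of_card_le (mul_nonpos_of_nonneg_of_nonpos k.cast_nonneg hc)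
    (fun i hi => nat_mul_le_sum_of_card_le hc (fun j _ => le_toReal_of_coe_le hc (hv _)) ?_)
    (card_range k).le
  rw [Nat.card_Icc]
  omega

lemma le_Wint (hc : c ≤ 0) (hv : ∀ x, (c : EReal) ≤ v x) (z z' : Fin k → ℝ) :
    k * (k * c) ≤ Wint v z z' :=
  nat_mul_le_sum_of_card_le (mul_nonpos_of_nonneg_of_nonpos k.cast_nonneg hc)
    (fun _ _ => nat_mul_le_sum_of_card_le hc (fun _ _ => le_toReal_of_coe_le hc (hv _))
      (card_range k).le)
    (card_range k).le

lemma Kgibbs_sq_le (hc : c ≤ 0) (hv : ∀ x, (c : EReal) ≤ v x) {β : ℝ} (hβ : 0 ≤ β) (p : ℝ)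
    (z z' : Fin k → ℝ) :
    Kgibbs v β p z z' ^ 2 ≤ Real.exp (-(4 * β * (k * (k * c))))
      * (Real.exp (-(β * p * ∑ i, z i)) * Real.exp (-(β * p * ∑ i, z' i))) := by
  have hE : 2 * (k * (k * c)) + p / 2 * (∑ i, z i + ∑ i, z' i)
      ≤ 1 / 2 * Vp v p z + Wint v z z' + 1 / 2 * Vp v p z' := by
    linarith [le_Vp hc hv p z, le_Vp hc hv p z', le_Wint hc hv z z']
  calc Kgibbs v β p z z' ^ 2
      ≤ Real.exp (-(β * (2 * (k * (k * c)) + p / 2 * (∑ i, z i + ∑ i, z' i)))) ^ 2 := by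
        unfold Kgibbs
        gcongr
    _ = _ := by
        rw [← Real.exp_nat_mul, ← Real.exp_add, ← Real.exp_add]
        ring_nf

end LowerBounds

lemma integrableOn_exp_neg_mul_sum {ι : Type*} [Fintype ι] {a : ℝ} (ha : 0 < a) (r : ℝ) :
    IntegrableOn (fun z : ι → ℝ => Real.exp (-(a * ∑ i, z i))) {z | ∀ i, r < z i} := by
  have hbox : {z : ι → ℝ | ∀ i, r < z i} = Set.univ.pi fun _ => Set.Ioi r := by
    ext z
    simp
  have hprod : (fun z : ι → ℝ => Real.exp (-(a * ∑ i, z i)))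
      = fun z => ∏ i, Real.exp (-a * z i) := by
    ext z
    rw [← Real.exp_sum, mul_sum, ← sum_neg_distrib]
    simp only [neg_mul]
  rw [IntegrableOn, hbox, volume_pi, Measure.restrict_pi_pi, hprod]
  exact Integrable.fintype_prod fun _ => exp_neg_integrableOn_Ioi r ha

lemma lintegral_prod_lt_top_of_le_mul {α β : Type*} [MeasurableSpace α] [MeasurableSpace β]
    {μ : Measure α} {ν : Measure β} [SFinite ν] {F : α × β → ℝ≥0∞} {f : α → ℝ≥0∞}
    {g : β → ℝ≥0∞} {C : ℝ≥0∞} (hC : C ≠ ⊤) (hf : AEMeasurable f μ) (hg : AEMeasurable g ν)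
    (hfi : ∫⁻ x, f x ∂μ < ⊤) (hgi : ∫⁻ y, g y ∂ν < ⊤) (hF : ∀ q, F q ≤ C * (f q.1 * g q.2)) :
    ∫⁻ q, F q ∂μ.prod ν < ⊤ :=
  calc ∫⁻ q, F q ∂μ.prod ν ≤ ∫⁻ q, C * (f q.1 * g q.2) ∂μ.prod ν := lintegral_mono hF
    _ = C * ((∫⁻ x, f x ∂μ) * ∫⁻ y, g y ∂ν) := by
        rw [lintegral_const_mul' _ _ hC, lintegral_prod_mul hf hg]
    _ < ⊤ := ENNReal.mul_lt_top hC.lt_top (ENNReal.mul_lt_top hfi hgi)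

theorem stmt8_general {k : ℕ} (v : ℝ → EReal)
    (c₀ : ℝ) (hvlb : ∀ x, (c₀ : EReal) ≤ v x)
    (rhc : ℝ)
    (p β : ℝ) (hp : 0 < p) (hβ : 0 < β) :
    (∀ z z' : Fin k → ℝ, (∀ i, rhc < z i) → (∀ i, rhc < z' i) →
      Kgibbs v β p z z'
        = Kgibbs v β p (fun i => z' (Fin.rev i)) (fun i => z (Fin.rev i))) ∧
    (∀ z z' : Fin k → ℝ, (∀ i, rhc < z i) → (∀ i, rhc < z' i) →
      0 < Kgibbs v β p z z') ∧
    (∫⁻ q : (Fin k → ℝ) × (Fin k → ℝ),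
        ENNReal.ofReal ((Kgibbs v β p q.1 q.2) ^ 2)
        ∂(((volume : Measure (Fin k → ℝ)).restrict {z | ∀ i, rhc < z i}).prod
          ((volume : Measure (Fin k → ℝ)).restrict {z | ∀ i, rhc < z i})) < ⊤) := by
  refine ⟨fun z z' _ _ => (Kgibbs_rev v β p z z').symm, fun _ _ _ _ => Real.exp_pos _, ?_⟩
  obtain ⟨c, hc, hv⟩ : ∃ c : ℝ, c ≤ 0 ∧ ∀ x, (c : EReal) ≤ v x :=
    ⟨min c₀ 0, min_le_right c₀ 0,
      fun x => (EReal.coe_le_coe_iff.2 (min_le_left c₀ 0)).trans (hvlb x)⟩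
  set f : (Fin k → ℝ) → ℝ≥0∞ := fun z => ENNReal.ofReal (Real.exp (-(β * p * ∑ i, z i)))
  have hf : Measurable f := by fun_prop
  have hfi : ∫⁻ z in {z | ∀ i, rhc < z i}, f z < ⊤ :=
    (integrableOn_exp_neg_mul_sum (mul_pos hβ hp) rhc).setLIntegral_lt_top
  refine lintegral_prod_lt_top_of_le_mul
    (C := ENNReal.ofReal (Real.exp (-(4 * β * (k * (k * c)))))) ENNReal.ofReal_ne_top
    hf.aemeasurable hf.aemeasurable hfi hfi fun q => ?_
  rw [← ENNReal.ofReal_mul (Real.exp_nonneg _), ← ENNReal.ofReal_mul (Real.exp_nonneg _)]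
  exact ENNReal.ofReal_le_ofReal (Kgibbs_sq_le hc hv hβ.le p q.1 q.2)

/-- The transfer kernel of a hard-core, finite pair potential is inversion symmetric,
strictly positive on the hard-core box, and Hilbert–Schmidt on L²((r_hc,∞)^k). -/
theorem stmt8 {k : ℕ} (hk : 0 < k) (v : ℝ → EReal) (hv : Measurable v)
    (c₀ : ℝ) (hvlb : ∀ x, (c₀ : EReal) ≤ v x)
    (rhc : ℝ) (hrhc : 0 < rhc) (hvfin : ∀ x ∈ Set.Ioi rhc, v x ≠ ⊤ ∧ v x ≠ ⊥)
    (p β : ℝ) (hp : 0 < p) (hβ : 0 < β) :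
    (∀ z z' : Fin k → ℝ, (∀ i, rhc < z i) → (∀ i, rhc < z' i) →
      Kgibbs v β p z z'
        = Kgibbs v β p (fun i => z' (Fin.rev i)) (fun i => z (Fin.rev i))) ∧
    (∀ z z' : Fin k → ℝ, (∀ i, rhc < z i) → (∀ i, rhc < z' i) →
      0 < Kgibbs v β p z z') ∧
    (∫⁻ q : (Fin k → ℝ) × (Fin k → ℝ),
        ENNReal.ofReal ((Kgibbs v β p q.1 q.2) ^ 2)
        ∂(((volume : Measure (Fin k → ℝ)).restrict {z | ∀ i, rhc < z i}).prod
          ((volume : Measure (Fin k → ℝ)).restrict {z | ∀ i, rhc < z i})) < ⊤) :=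
  stmt8_general v c₀ hvlb rhc p β hp hβ
end
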